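/- Let (L,[-,-],{-,-,-},R) be a modified Rota-Baxter Lie-Yamaguti algebra and let L_R = (L, [-,-]_R, {-,-,-}_R) be the Lie-Yamaguti algebra with [x,y]_R := [Rx,y] + [x,Ry] and {x,y,z}_R := {x,Ry,Rz} + {Rx,y,Rz} + {Rx,Ry,z} + {x,y,z}. Then R is a modified Rota-Baxter operator on L_R, i.e. (L_R, R) is a modified Rota-Baxter Lie-Yamaguti algebra. -/

import Mathlib

/-!
Writing `[x,y]_R = [Rx,y] + [x,Ry]`, one has `[Rx,Ry]_R = [R(Rx),Ry] + [Rx,R(Ry)]`; applying the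
modified Rota-Baxter identity of `R` for `[-,-]` to the pairs `(Rx,y)` and `(x,Ry)` and regrouping
the eight resulting terms gives the identity for `[-,-]_R`. The ternary bracket is handled the same
way, applying the identity for `{-,-,-}` to the triples `(x,Ry,Rz)`, `(Rx,y,Rz)`, `(Rx,Ry,z)` and
`(x,y,z)`.
-/

/-- A Lie-Yamaguti algebra: bilinear bracket `br`, trilinear bracket `tr`,
satisfying (LY1)-(LY6). -/
structure LieYamaguti (K : Type*) (L : Type*) [Field K] [AddCommGroup L] [Module K L] where
  br : L →ₗ[K] L →ₗ[K] L
  tr : L →ₗ[K] L →ₗ[K] L →ₗ[K] L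
  ly1 : ∀ x y, br x y = - br y x
  ly2 : ∀ x y z, tr x y z = - tr y x z
  ly3 : ∀ x y z,
    br (br x y) z + br (br y z) x + br (br z x) y + tr x y z + tr y z x + tr z x y = 0
  ly4 : ∀ x y z a, tr (br x y) z a + tr (br z x) y a + tr (br y z) x a = 0
  ly5 : ∀ a b x y, tr a b (br x y) = br (tr a b x) y + br x (tr a b y)
  ly6 : ∀ a b x y z,
    tr a b (tr x y z) = tr (tr a b x) y z + tr x (tr a b y) z + tr x y (tr a b z)

/-- A modified Rota-Baxter operator on a Lie-Yamaguti algebra. -/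
def IsMRB {K L : Type*} [Field K] [AddCommGroup L] [Module K L]
    (A : LieYamaguti K L) (R : L →ₗ[K] L) : Prop :=
  (∀ x y, A.br (R x) (R y) = R (A.br (R x) y + A.br x (R y)) - A.br x y) ∧
  (∀ x y z, A.tr (R x) (R y) (R z) =
      R (A.tr x (R y) (R z) + A.tr (R x) y (R z) + A.tr (R x) (R y) z + A.tr x y z)
      - A.tr (R x) y z - A.tr x (R y) z - A.tr x y (R z))

section ModifiedRotaBaxter

variable {S M : Type*} [CommRing S] [AddCommGroup M] [Module S M]

def IsModifiedRotaBaxter₂ (f : M → M → M) (R : M → M) : Prop :=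
  ∀ x y, f (R x) (R y) = R (f (R x) y + f x (R y)) - f x y

def IsModifiedRotaBaxter₃ (f : M → M → M → M) (R : M → M) : Prop :=
  ∀ x y z, f (R x) (R y) (R z) =
    R (f x (R y) (R z) + f (R x) y (R z) + f (R x) (R y) z + f x y z)
      - f (R x) y z - f x (R y) z - f x y (R z)

def descendent₂ (f : M → M → M) (R : M → M) (x y : M) : M :=
  f (R x) y + f x (R y)

def descendent₃ (f : M → M → M → M) (R : M → M) (x y z : M) : M :=
  f x (R y) (R z) + f (R x) y (R z) + f (R x) (R y) z + f x y z

theorem IsModifiedRotaBaxter₂.descendent₂ {f : M →ₗ[S] M →ₗ[S] M} {R : M →ₗ[S] M}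
    (h : IsModifiedRotaBaxter₂ (f · ·) R) :
    IsModifiedRotaBaxter₂ (descendent₂ (f · ·) R) R := by
  dsimp only [IsModifiedRotaBaxter₂] at h
  intro x y
  simp only [_root_.descendent₂]
  rw [h (R x) y, h x (R y)]
  simp only [map_add]
  abel

theorem IsModifiedRotaBaxter₃.descendent₃ {f : M →ₗ[S] M →ₗ[S] M →ₗ[S] M} {R : M →ₗ[S] M}
    (h : IsModifiedRotaBaxter₃ (f · · ·) R) :
    IsModifiedRotaBaxter₃ (descendent₃ (f · · ·) R) R := by
  dsimp only [IsModifiedRotaBaxter₃] at h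
  intro x y z
  simp only [_root_.descendent₃]
  rw [h x (R y) (R z), h (R x) y (R z), h (R x) (R y) z, h x y z]
  simp only [map_add]
  abel

end ModifiedRotaBaxter

theorem isMRB_descendent_general (K L : Type*) [Field K]
    [AddCommGroup L] [Module K L]
    (A : LieYamaguti K L) (R : L →ₗ[K] L) (hR : IsMRB A R) :
    ∀ (brR : L → L → L) (trR : L → L → L → L),
      (∀ x y, brR x y = A.br (R x) y + A.br x (R y)) →
      (∀ x y z, trR x y z
          = A.tr x (R y) (R z) + A.tr (R x) y (R z) + A.tr (R x) (R y) z + A.tr x y z) →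
      (∀ x y, brR (R x) (R y) = R (brR (R x) y + brR x (R y)) - brR x y) ∧
      (∀ x y z, trR (R x) (R y) (R z)
          = R (trR x (R y) (R z) + trR (R x) y (R z) + trR (R x) (R y) z + trR x y z)
            - trR (R x) y z - trR x (R y) z - trR x y (R z)) := by
  intro brR trR hbr htr
  obtain rfl : brR = descendent₂ (A.br · ·) R := funext₂ hbr
  obtain rfl : trR = descendent₃ (A.tr · · ·) R := funext₃ htr
  exact ⟨IsModifiedRotaBaxter₂.descendent₂ hR.1, IsModifiedRotaBaxter₃.descendent₃ hR.2⟩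

/-- `R` is again a modified Rota-Baxter operator for the descendent brackets
`[x,y]_R := [Rx,y] + [x,Ry]` and
`{x,y,z}_R := {x,Ry,Rz} + {Rx,y,Rz} + {Rx,Ry,z} + {x,y,z}`. -/
theorem isMRB_descendent (K L : Type*) [Field K] [CharZero K]
    [AddCommGroup L] [Module K L]
    (A : LieYamaguti K L) (R : L →ₗ[K] L) (hR : IsMRB A R) :
    ∀ (brR : L → L → L) (trR : L → L → L → L),
      (∀ x y, brR x y = A.br (R x) y + A.br x (R y)) →
      (∀ x y z, trR x y z
          = A.tr x (R y) (R z) + A.tr (R x) y (R z) + A.tr (R x) (R y) z + A.tr x y z) →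
      (∀ x y, brR (R x) (R y) = R (brR (R x) y + brR x (R y)) - brR x y) ∧
      (∀ x y z, trR (R x) (R y) (R z)
          = R (trR x (R y) (R z) + trR (R x) y (R z) + trR (R x) (R y) z + trR x y z)
            - trR (R x) y z - trR x (R y) z - trR x y (R z)) :=
  isMRB_descendent_general K L A R hR
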